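/- arXiv:1902.04136 — 2 statements merged into one kernel-verified Lean document; each statement's English description precedes it below -/
import Mathlib

section
/- For every positive integer n and every subset R ⊆ {1,…,n} of even cardinality, the reflection σ_R maps the demi-hypercube Δ ⊆ ℝⁿ onto itself, i.e. σ_R(Δ) = Δ. -/
open Finset

/-- Indicator vector of a subset `I ⊆ {1,…,n}` in `ℝⁿ`. -/
def xi {n : ℕ} (I : Finset (Fin n)) : Fin n → ℝ := fun i => if i ∈ I then 1 else 0

/-- The demi-hypercube: convex hull of the even vertices of `[0,1]ⁿ`. -/
def DemiCube (n : ℕ) : Set (Fin n → ℝ) :=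
  convexHull ℝ {x : Fin n → ℝ | ∃ I : Finset (Fin n), Even I.card ∧ x = xi I}

/-- The reflection `σ_R` replacing `x_i` by `1 − x_i` for `i ∈ R`. -/
def sigmaRefl {n : ℕ} (R : Finset (Fin n)) (x : Fin n → ℝ) : Fin n → ℝ :=
  fun i => if i ∈ R then 1 - x i else x i

/-- `σ_R` as an affine map. -/
noncomputable def sigmaAff {n : ℕ} (R : Finset (Fin n)) :
    (Fin n → ℝ) →ᵃ[ℝ] (Fin n → ℝ) where
  toFun := sigmaRefl R
  linear :=
    { toFun := fun x i => if i ∈ R then -x i else x i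
      map_add' := by intro x y; funext i; by_cases h : i ∈ R <;> simp [h] <;> ring
      map_smul' := by intro c x; funext i; by_cases h : i ∈ R <;> simp [h] <;> ring }
  map_vadd' := by
    intro p v
    funext i
    simp only [sigmaRefl]
    by_cases h : i ∈ R <;> simp [h, sigmaRefl] <;> ring

lemma sigma_xi {n : ℕ} (R I : Finset (Fin n)) :
    sigmaRefl R (xi I) = xi (symmDiff R I) := by
  funext i
  simp only [sigmaRefl, xi, Finset.mem_symmDiff]
  by_cases h : i ∈ R <;> by_cases h' : i ∈ I <;> simp [h, h']

lemma even_symmDiff {n : ℕ} {R I : Finset (Fin n)} (hR : Even R.card)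
    (hI : Even I.card) : Even (symmDiff R I).card := by
  rw [symmDiff_def, Finset.sup_eq_union, Finset.card_union_of_disjoint disjoint_sdiff_sdiff]
  have h1 : (R \ I).card + (R ∩ I).card = R.card := Finset.card_sdiff_add_card_inter R I
  have h2 : (I \ R).card + (I ∩ R).card = I.card := Finset.card_sdiff_add_card_inter I R
  have h3 : (R ∩ I).card = (I ∩ R).card := by rw [Finset.inter_comm]
  obtain ⟨a, ha⟩ := hR
  obtain ⟨b, hb⟩ := hI
  refine ⟨a + b - (R ∩ I).card, ?_⟩
  omega

lemma sigma_image_vertices {n : ℕ} (R : Finset (Fin n)) (hR : Even R.card) :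
    sigmaRefl R '' {x : Fin n → ℝ | ∃ I : Finset (Fin n), Even I.card ∧ x = xi I}
      = {x : Fin n → ℝ | ∃ I : Finset (Fin n), Even I.card ∧ x = xi I} := by
  ext x
  constructor
  · rintro ⟨y, ⟨I, hI, rfl⟩, rfl⟩
    exact ⟨symmDiff R I, even_symmDiff hR hI, (sigma_xi R I)⟩
  · rintro ⟨I, hI, rfl⟩
    refine ⟨xi (symmDiff R I), ⟨symmDiff R I, even_symmDiff hR hI, rfl⟩, ?_⟩
    rw [sigma_xi, symmDiff_symmDiff_cancel_left]

theorem stmt_6 (n : ℕ) (hn : 0 < n) (R : Finset (Fin n)) (hR : Even R.card) :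
    sigmaRefl R '' DemiCube n = DemiCube n := by
  have h : sigmaRefl R = ⇑(sigmaAff R) := rfl
  rw [DemiCube, h, AffineMap.image_convexHull, ← h, sigma_image_vertices R hR]
end

section
/- For every positive integer n and every subset R ⊆ {1,…,n} of even cardinality, the reflection σ_R maps the polytope Π ⊆ ℝⁿ onto itself, i.e. σ_R(Π) = Π. -/
open Finset

/-- The affine function `H_I(x) = ∑_{j∉I} x_j + ∑_{i∈I} (1 − x_i)`. -/
def Hfun {n : ℕ} (I : Finset (Fin n)) (x : Fin n → ℝ) : ℝ :=
  ∑ j ∈ Iᶜ, x j + ∑ i ∈ I, (1 - x i)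

/-- The polytope `Π = Δ ∩ (H_I ≥ 2 for all even I)`. -/
def PiPoly (n : ℕ) : Set (Fin n → ℝ) :=
  DemiCube n ∩ {x : Fin n → ℝ | ∀ I : Finset (Fin n), Even I.card → 2 ≤ Hfun I x}

/-! `σ_R` sends the vertex `ξ_I` to `ξ_{I ∆ R}` and pulls `H_I` back to `H_{I ∆ R}`. Since `|R|` is
even, `I ↦ I ∆ R` permutes the even subsets, so `σ_R` permutes the vertices of `Δ` and the
inequalities cutting out `Π`; being an involutive affine map, it therefore maps `Π` onto itself. -/

open scoped symmDiff

theorem Finset.even_card_symmDiff {α : Type*} [DecidableEq α] {s t : Finset α}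
    (hs : Even s.card) (ht : Even t.card) : Even (s ∆ t).card := by
  have h_union : (s ∆ t).card = (s \ t).card + (t \ s).card :=
    card_union_of_disjoint disjoint_sdiff_sdiff
  have hs' := card_sdiff_add_card_inter s t
  have ht' := card_sdiff_add_card_inter t s
  rw [inter_comm] at ht'
  rw [Nat.even_iff] at hs ht ⊢
  omega

variable {n : ℕ}

theorem sigmaRefl_involutive (R : Finset (Fin n)) : Function.Involutive (sigmaRefl R) := by
  intro x
  funext i
  by_cases h : i ∈ R <;> simp [sigmaRefl, h]

noncomputable def sigmaReflAffine (R : Finset (Fin n)) : (Fin n → ℝ) →ᵃ[ℝ] (Fin n → ℝ) where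
  toFun := sigmaRefl R
  linear := LinearMap.pi fun i =>
    if i ∈ R then -LinearMap.proj i else LinearMap.proj i
  map_vadd' p v := by
    funext i
    by_cases h : i ∈ R <;> simp [sigmaRefl, h]; ring

@[simp]
theorem coe_sigmaReflAffine (R : Finset (Fin n)) : ⇑(sigmaReflAffine R) = sigmaRefl R := rfl

theorem sigmaRefl_xi (R I : Finset (Fin n)) : sigmaRefl R (xi I) = xi (I ∆ R) := by
  funext i
  by_cases hR : i ∈ R <;> by_cases hI : i ∈ I <;> simp [sigmaRefl, xi, hR, hI, mem_symmDiff]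

theorem Hfun_eq_sum_ite (I : Finset (Fin n)) (x : Fin n → ℝ) :
    Hfun I x = ∑ j, if j ∈ I then 1 - x j else x j := by
  rw [Hfun, sum_ite, add_comm, filter_mem_eq_inter, univ_inter, filter_not, ← compl_eq_univ_sdiff,
    filter_mem_eq_inter, univ_inter]

theorem Hfun_sigmaRefl (R I : Finset (Fin n)) (x : Fin n → ℝ) :
    Hfun I (sigmaRefl R x) = Hfun (I ∆ R) x := by
  rw [Hfun_eq_sum_ite, Hfun_eq_sum_ite]
  refine sum_congr rfl fun j _ => ?_
  by_cases hR : j ∈ R <;> by_cases hI : j ∈ I <;> simp [sigmaRefl, hR, hI, mem_symmDiff]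

theorem sigmaRefl_mapsTo_demiCube {R : Finset (Fin n)} (hR : Even R.card) :
    Set.MapsTo (sigmaRefl R) (DemiCube n) (DemiCube n) := by
  rw [Set.mapsTo_iff_image_subset, DemiCube, ← coe_sigmaReflAffine, AffineMap.image_convexHull]
  refine convexHull_mono ?_
  rintro _ ⟨_, ⟨I, hI, rfl⟩, rfl⟩
  exact ⟨I ∆ R, even_card_symmDiff hI hR, sigmaRefl_xi R I⟩

theorem sigmaRefl_mapsTo_piPoly {R : Finset (Fin n)} (hR : Even R.card) :
    Set.MapsTo (sigmaRefl R) (PiPoly n) (PiPoly n) := by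
  rintro x ⟨hx_cube, hx_ineq⟩
  refine ⟨sigmaRefl_mapsTo_demiCube hR hx_cube, fun I hI => ?_⟩
  rw [Hfun_sigmaRefl]
  exact hx_ineq _ (even_card_symmDiff hI hR)

theorem stmt_7_general (n : ℕ) (R : Finset (Fin n)) (hR : Even R.card) :
    sigmaRefl R '' PiPoly n = PiPoly n :=
  (sigmaRefl_mapsTo_piPoly hR).image_subset.antisymm fun x hx =>
    ⟨sigmaRefl R x, sigmaRefl_mapsTo_piPoly hR hx, sigmaRefl_involutive R x⟩

theorem stmt_7 (n : ℕ) (hn : 0 < n) (R : Finset (Fin n)) (hR : Even R.card) :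
    sigmaRefl R '' PiPoly n = PiPoly n :=
  stmt_7_general n R hR
end
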